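/- arXiv:2207.08535 — 2 statements merged into one kernel-verified Lean document; each statement's English description precedes it below -/
import Mathlib

section
/- For discrete (X, Y, R) with positivity, for each missingness pattern r: E{1(R = 1) · p(r | X, Y)/p(R = 1 | X, Y) − 1(R = r) | X} = 0 almost surely. -/
open Finset
open scoped Classical

noncomputable def pr {Ω : Type*} [Fintype Ω] (μ : Ω → ℝ) (A : Ω → Prop) : ℝ :=
  ∑ ω, if A ω then μ ω else 0

noncomputable def cpr {Ω : Type*} [Fintype Ω] (μ : Ω → ℝ) (A B : Ω → Prop) : ℝ :=
  pr μ (fun ω => A ω ∧ B ω) / pr μ B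

/-- Conditional expectation `E{h | B}` in a finite probability space. -/
noncomputable def cexp {Ω : Type*} [Fintype Ω] (μ : Ω → ℝ) (h : Ω → ℝ) (B : Ω → Prop) : ℝ :=
  (∑ ω, if B ω then μ ω * h ω else 0) / pr μ B

/-- The propensity `Π_r(x, y) = p(R = r | X = x, Y = y)`. -/
noncomputable def patProp {Ω 𝒳 𝒴 : Type*} [Fintype Ω] {p : ℕ} (μ : Ω → ℝ)
    (X : Ω → 𝒳) (Y : Ω → Fin p → 𝒴) (R : Ω → Fin p → Bool)
    (r : Fin p → Bool) (x : 𝒳) (y : Fin p → 𝒴) : ℝ :=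
  cpr μ (fun ω => ∀ j, R ω j = r j) (fun ω => X ω = x ∧ ∀ j, Y ω j = y j)

/-- for each missingness pattern `r`,
`E{1(R = 1) Π_r(X,Y)/Π_1(X,Y) − 1(R = r) | X} = 0` almost surely. -/
theorem stmt12 {Ω 𝒳 𝒴 : Type*} [Fintype Ω] {p : ℕ}
    (μ : Ω → ℝ) (hμ0 : ∀ ω, 0 ≤ μ ω) (hμ1 : ∑ ω, μ ω = 1)
    (X : Ω → 𝒳) (Y : Ω → Fin p → 𝒴) (R : Ω → Fin p → Bool)
    (hpos : ∀ (r' : Fin p → Bool) (x : 𝒳) (y : Fin p → 𝒴),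
      pr μ (fun ω => X ω = x ∧ ∀ j, Y ω j = y j) > 0 →
      patProp μ X Y R r' x y > 0)
    (r : Fin p → Bool) (x : 𝒳) (hx : pr μ (fun ω => X ω = x) > 0) :
    cexp μ
      (fun ω =>
        (if ∀ j, R ω j = true then
            patProp μ X Y R r (X ω) (Y ω) / patProp μ X Y R (fun _ => true) (X ω) (Y ω)
          else 0) -
          (if ∀ j, R ω j = r j then 1 else 0))
      (fun ω => X ω = x) = 0 := by
  classical
  unfold cexp
  rw [div_eq_zero_iff]
  left
  rw [← Finset.sum_filter]
  rw [← Finset.sum_fiberwise_of_maps_to (g := Y)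
      (t := (univ.filter (fun ω => X ω = x)).image Y)
      (fun ω hω => Finset.mem_image_of_mem Y hω)]
  apply Finset.sum_eq_zero
  intro y hy
  rw [Finset.filter_filter]
  simp only [Finset.filter_congr_decidable]
  beta_reduce
  have hmem : ∀ ω ∈ univ.filter (fun ω => X ω = x ∧ Y ω = y), X ω = x ∧ Y ω = y :=
    fun ω hω => (Finset.mem_filter.mp hω).2
  by_cases hqpos : pr μ (fun ω => X ω = x ∧ ∀ j, Y ω j = y j) > 0
  · have hqne : pr μ (fun ω => X ω = x ∧ ∀ j, Y ω j = y j) ≠ 0 := ne_of_gt hqpos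
    have hPone := hpos (fun _ => true) x y hqpos
    have hPr := hpos r x y hqpos
    have hN1 : pr μ (fun ω => (∀ j, R ω j = true) ∧ X ω = x ∧ ∀ j, Y ω j = y j)
        = patProp μ X Y R (fun _ => true) x y *
            pr μ (fun ω => X ω = x ∧ ∀ j, Y ω j = y j) := by
      simp only [patProp, cpr]
      rw [div_mul_cancel₀ _ hqne]
    have hNr : pr μ (fun ω => (∀ j, R ω j = r j) ∧ X ω = x ∧ ∀ j, Y ω j = y j)
        = patProp μ X Y R r x y *
            pr μ (fun ω => X ω = x ∧ ∀ j, Y ω j = y j) := by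
      simp only [patProp, cpr]
      rw [div_mul_cancel₀ _ hqne]
    have hz : (0 : ℝ) = (patProp μ X Y R r x y / patProp μ X Y R (fun _ => true) x y) *
          pr μ (fun ω => (∀ j, R ω j = true) ∧ X ω = x ∧ ∀ j, Y ω j = y j) -
        pr μ (fun ω => (∀ j, R ω j = r j) ∧ X ω = x ∧ ∀ j, Y ω j = y j) := by
      rw [hN1, hNr]
      field_simp
      ring
    rw [Finset.sum_filter]
    conv_rhs => rw [hz]
    unfold pr
    rw [Finset.mul_sum, ← Finset.sum_sub_distrib]
    apply Finset.sum_congr rfl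
    intro ω _
    by_cases hxy : X ω = x ∧ Y ω = y
    · obtain ⟨hx', hy'⟩ := hxy
      have hy'' : ∀ j, Y ω j = y j := fun j => by rw [hy']
      rw [if_pos ⟨hx', hy'⟩, hx', hy']
      by_cases h1 : ∀ j, R ω j = true <;> by_cases h2 : ∀ j, R ω j = r j
      · rw [if_pos h1, if_pos h2, if_pos ⟨h1, hx', hy''⟩, if_pos ⟨h2, hx', hy''⟩]; ring
      · rw [if_pos h1, if_neg h2, if_pos ⟨h1, hx', hy''⟩,
          if_neg (fun h => h2 h.1)]; ring
      · rw [if_neg h1, if_pos h2, if_neg (fun h => h1 h.1),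
          if_pos ⟨h2, hx', hy''⟩]; ring
      · rw [if_neg h1, if_neg h2, if_neg (fun h => h1 h.1),
          if_neg (fun h => h2 h.1)]; ring
    · have hA1 : ¬((∀ j, R ω j = true) ∧ X ω = x ∧ ∀ j, Y ω j = y j) :=
        fun h => hxy ⟨h.2.1, funext h.2.2⟩
      have hAr : ¬((∀ j, R ω j = r j) ∧ X ω = x ∧ ∀ j, Y ω j = y j) :=
        fun h => hxy ⟨h.2.1, funext h.2.2⟩
      rw [if_neg hxy, if_neg hA1, if_neg hAr]; ring
  · have hqnonneg : 0 ≤ pr μ (fun ω => X ω = x ∧ ∀ j, Y ω j = y j) := by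
      unfold pr
      apply Finset.sum_nonneg
      intro ω _
      split
      · exact hμ0 ω
      · exact le_refl 0
    have hq0 : pr μ (fun ω => X ω = x ∧ ∀ j, Y ω j = y j) = 0 :=
      le_antisymm (not_lt.mp hqpos) hqnonneg
    have hμz : ∀ ω, X ω = x ∧ Y ω = y → μ ω = 0 := by
      intro ω hω
      have := (Finset.sum_eq_zero_iff_of_nonneg (fun ω _ => by
        dsimp only
        split
        · exact hμ0 ω
        · exact le_refl 0)).mp hq0 ω (Finset.mem_univ ω)
      simp only [funext_iff] at hω
      rw [if_pos ⟨hω.1, hω.2⟩] at this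
      exact this
    apply Finset.sum_eq_zero
    intro ω hω
    simp [hμz ω (hmem ω hω)]
end

section
/- Identification of the full-data law from propensities: for discrete (X, Y, R) with positivity, the joint law satisfies f(y, r | x) = f(y, R = 1 | x) · p(r | x, y) / p(R = 1 | x, y); hence if p(r | x, y) is identified for all patterns r, then the full joint distribution f(y, r | x) is identified from the complete-case distribution f(y, R = 1 | x). -/
/-!
By the chain rule, `f(y, r | x) = p(r | x, y) · f(y | x)` for every pattern `r`; taking the
quotient of this identity for `r` and for `R = 1` eliminates the unobserved `f(y | x)`.
Two laws that agree on the complete-case distribution and on all propensities therefore agree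
on `f(y, r | x)`.
-/

open Finset
open scoped Classical

lemma pr_congr {Ω : Type*} [Fintype Ω] (μ : Ω → ℝ) {A B : Ω → Prop}
    (h : ∀ ω, A ω ↔ B ω) : pr μ A = pr μ B :=
  Finset.sum_congr rfl fun ω _ => if_congr (h ω) rfl rfl

lemma cpr_and_eq_mul {Ω : Type*} [Fintype Ω] (μ : Ω → ℝ) (A B C : Ω → Prop)
    (h : pr μ (fun ω => C ω ∧ B ω) ≠ 0) :
    cpr μ (fun ω => B ω ∧ A ω) C = cpr μ A (fun ω => C ω ∧ B ω) * cpr μ B C := by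
  unfold cpr
  rw [pr_congr μ (B := fun ω => A ω ∧ C ω ∧ B ω) fun ω => by tauto,
    pr_congr μ (A := fun ω => B ω ∧ C ω) (B := fun ω => C ω ∧ B ω) fun ω => and_comm]
  field_simp

lemma cpr_eq_cpr_complete_mul_patProp_div {Ω 𝒳 𝒴 : Type*} [Fintype Ω] {p : ℕ}
    (μ : Ω → ℝ) (X : Ω → 𝒳) (Y : Ω → Fin p → 𝒴) (R : Ω → Fin p → Bool)
    {x : 𝒳} {y : Fin p → 𝒴} (r : Fin p → Bool)
    (hxy : pr μ (fun ω => X ω = x ∧ ∀ j, Y ω j = y j) ≠ 0)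
    (hcomplete : patProp μ X Y R (fun _ => true) x y ≠ 0) :
    cpr μ (fun ω => (∀ j, Y ω j = y j) ∧ ∀ j, R ω j = r j) (fun ω => X ω = x)
      = cpr μ (fun ω => (∀ j, Y ω j = y j) ∧ ∀ j, R ω j = true) (fun ω => X ω = x)
        * patProp μ X Y R r x y / patProp μ X Y R (fun _ => true) x y := by
  unfold patProp at *
  rw [cpr_and_eq_mul μ _ _ _ hxy, cpr_and_eq_mul μ _ _ _ hxy]
  field_simp

theorem stmt19_general {Ω Ω' 𝒳 𝒴 : Type*} [Fintype Ω] [Fintype Ω'] {p : ℕ}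
    (μ : Ω → ℝ)
    (X : Ω → 𝒳) (Y : Ω → Fin p → 𝒴) (R : Ω → Fin p → Bool)
    (μ' : Ω' → ℝ)
    (X' : Ω' → 𝒳) (Y' : Ω' → Fin p → 𝒴) (R' : Ω' → Fin p → Bool)
    (hpos : ∀ (r' : Fin p → Bool) (x : 𝒳) (y : Fin p → 𝒴),
      pr μ (fun ω => X ω = x ∧ ∀ j, Y ω j = y j) > 0 → patProp μ X Y R r' x y > 0)
    (hpos' : ∀ (r' : Fin p → Bool) (x : 𝒳) (y : Fin p → 𝒴),
      pr μ' (fun ω => X' ω = x ∧ ∀ j, Y' ω j = y j) > 0 →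
      patProp μ' X' Y' R' r' x y > 0)
    (x : 𝒳) :
    (∀ (y : Fin p → 𝒴) (r : Fin p → Bool),
      pr μ (fun ω => X ω = x ∧ ∀ j, Y ω j = y j) > 0 →
      cpr μ (fun ω => (∀ j, Y ω j = y j) ∧ ∀ j, R ω j = r j) (fun ω => X ω = x)
        = cpr μ (fun ω => (∀ j, Y ω j = y j) ∧ ∀ j, R ω j = true) (fun ω => X ω = x)
          * patProp μ X Y R r x y / patProp μ X Y R (fun _ => true) x y) ∧
    ((∀ y : Fin p → 𝒴,
        (pr μ (fun ω => X ω = x ∧ ∀ j, Y ω j = y j) > 0 ↔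
          pr μ' (fun ω => X' ω = x ∧ ∀ j, Y' ω j = y j) > 0)) →
      (∀ y : Fin p → 𝒴,
        cpr μ (fun ω => (∀ j, Y ω j = y j) ∧ ∀ j, R ω j = true) (fun ω => X ω = x)
          = cpr μ' (fun ω => (∀ j, Y' ω j = y j) ∧ ∀ j, R' ω j = true)
              (fun ω => X' ω = x)) →
      (∀ (y : Fin p → 𝒴) (r : Fin p → Bool),
        pr μ (fun ω => X ω = x ∧ ∀ j, Y ω j = y j) > 0 →
        patProp μ X Y R r x y = patProp μ' X' Y' R' r x y) →
      ∀ (y : Fin p → 𝒴) (r : Fin p → Bool),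
        pr μ (fun ω => X ω = x ∧ ∀ j, Y ω j = y j) > 0 →
        cpr μ (fun ω => (∀ j, Y ω j = y j) ∧ ∀ j, R ω j = r j) (fun ω => X ω = x)
          = cpr μ' (fun ω => (∀ j, Y' ω j = y j) ∧ ∀ j, R' ω j = r j)
              (fun ω => X' ω = x)) := by
  refine ⟨fun y r hxy => ?_, fun hsupp hcomplete hprop y r hxy => ?_⟩
  · exact cpr_eq_cpr_complete_mul_patProp_div μ X Y R r hxy.ne' (hpos _ x y hxy).ne'
  · have hxy' := (hsupp y).mp hxy
    rw [cpr_eq_cpr_complete_mul_patProp_div μ X Y R r hxy.ne' (hpos _ x y hxy).ne',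
      cpr_eq_cpr_complete_mul_patProp_div μ' X' Y' R' r hxy'.ne' (hpos' _ x y hxy').ne',
      hcomplete y, hprop y r hxy, hprop y _ hxy]

/-- the identity
`f(y, r | x) = f(y, R = 1 | x) · p(r | x, y) / p(R = 1 | x, y)`; hence if two laws with
positivity share the complete-case distribution and all pattern propensities, they
share the whole joint law `f(y, r | x)`. -/
theorem stmt19 {Ω Ω' 𝒳 𝒴 : Type*} [Fintype Ω] [Fintype Ω'] {p : ℕ}
    (μ : Ω → ℝ) (hμ0 : ∀ ω, 0 ≤ μ ω) (hμ1 : ∑ ω, μ ω = 1)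
    (X : Ω → 𝒳) (Y : Ω → Fin p → 𝒴) (R : Ω → Fin p → Bool)
    (μ' : Ω' → ℝ) (hμ'0 : ∀ ω, 0 ≤ μ' ω) (hμ'1 : ∑ ω, μ' ω = 1)
    (X' : Ω' → 𝒳) (Y' : Ω' → Fin p → 𝒴) (R' : Ω' → Fin p → Bool)
    (hpos : ∀ (r' : Fin p → Bool) (x : 𝒳) (y : Fin p → 𝒴),
      pr μ (fun ω => X ω = x ∧ ∀ j, Y ω j = y j) > 0 → patProp μ X Y R r' x y > 0)
    (hpos' : ∀ (r' : Fin p → Bool) (x : 𝒳) (y : Fin p → 𝒴),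
      pr μ' (fun ω => X' ω = x ∧ ∀ j, Y' ω j = y j) > 0 →
      patProp μ' X' Y' R' r' x y > 0)
    (x : 𝒳) (hx : pr μ (fun ω => X ω = x) > 0)
    (hx' : pr μ' (fun ω => X' ω = x) > 0) :
    (∀ (y : Fin p → 𝒴) (r : Fin p → Bool),
      pr μ (fun ω => X ω = x ∧ ∀ j, Y ω j = y j) > 0 →
      cpr μ (fun ω => (∀ j, Y ω j = y j) ∧ ∀ j, R ω j = r j) (fun ω => X ω = x)
        = cpr μ (fun ω => (∀ j, Y ω j = y j) ∧ ∀ j, R ω j = true) (fun ω => X ω = x)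
          * patProp μ X Y R r x y / patProp μ X Y R (fun _ => true) x y) ∧
    ((∀ y : Fin p → 𝒴,
        (pr μ (fun ω => X ω = x ∧ ∀ j, Y ω j = y j) > 0 ↔
          pr μ' (fun ω => X' ω = x ∧ ∀ j, Y' ω j = y j) > 0)) →
      (∀ y : Fin p → 𝒴,
        cpr μ (fun ω => (∀ j, Y ω j = y j) ∧ ∀ j, R ω j = true) (fun ω => X ω = x)
          = cpr μ' (fun ω => (∀ j, Y' ω j = y j) ∧ ∀ j, R' ω j = true)
              (fun ω => X' ω = x)) →
      (∀ (y : Fin p → 𝒴) (r : Fin p → Bool),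
        pr μ (fun ω => X ω = x ∧ ∀ j, Y ω j = y j) > 0 →
        patProp μ X Y R r x y = patProp μ' X' Y' R' r x y) →
      ∀ (y : Fin p → 𝒴) (r : Fin p → Bool),
        pr μ (fun ω => X ω = x ∧ ∀ j, Y ω j = y j) > 0 →
        cpr μ (fun ω => (∀ j, Y ω j = y j) ∧ ∀ j, R ω j = r j) (fun ω => X ω = x)
          = cpr μ' (fun ω => (∀ j, Y' ω j = y j) ∧ ∀ j, R' ω j = r j)
              (fun ω => X' ω = x)) :=
  stmt19_general μ X Y R μ' X' Y' R' hpos hpos' x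
end
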